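/- arXiv:2309.03413 — 6 statements merged into one kernel-verified Lean document; each statement's English description precedes it below -/
import Mathlib

section
/- Let X and Y be second-countable, locally compact, Hausdorff, totally disconnected topological spaces and let σ : X → Y be a surjective local homeomorphism. Then there exists a section φ : Y → X of σ (i.e., σ ∘ φ = id) that is a local homeomorphism. -/
/-!
Cover `Y` by the sources of local inverses of `σ`. Since `Y` is zero-dimensional and Lindelöf,
this cover can be refined to a countable clopen cover `V₀, V₁, …`; sending `y` to the local
inverse attached to the first `Vₙ` containing `y` is locally constant, so the resulting section
agrees near every point with a single local inverse of `σ`.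
-/

open Set Topology TopologicalSpace

section LocallyConstantChoice

variable {Y ι : Type*} [TopologicalSpace Y]

theorem exists_isLocallyConstant_mem_of_isClopen_nat (V : ℕ → Set Y) (hV : ∀ n, IsClopen (V n))
    (hcov : ∀ y, ∃ n, y ∈ V n) : ∃ N : Y → ℕ, IsLocallyConstant N ∧ ∀ y, y ∈ V (N y) := by
  classical
  refine ⟨fun y => Nat.find (hcov y), ?_, fun y => Nat.find_spec (hcov y)⟩
  refine IsLocallyConstant.iff_isOpen_fiber.2 fun n => ?_
  have hfiber : (fun y => Nat.find (hcov y)) ⁻¹' {n} = V n ∩ ⋂ m ∈ Finset.range n, (V m)ᶜ := by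
    ext y
    simp [Nat.find_eq_iff]
  rw [hfiber]
  exact (hV n).isOpen.inter (isOpen_biInter_finset fun m _ => (hV m).isClosed.isOpen_compl)

theorem exists_isLocallyConstant_mem_of_isClopen [LindelofSpace Y] (V : ι → Set Y)
    (hV : ∀ i, IsClopen (V i)) (hcov : ∀ y, ∃ i, y ∈ V i) :
    ∃ f : Y → ι, IsLocallyConstant f ∧ ∀ y, y ∈ V (f y) := by
  rcases isEmpty_or_nonempty Y with _ | ⟨⟨y₀⟩⟩
  · exact ⟨isEmptyElim, IsLocallyConstant.of_discrete _, isEmptyElim⟩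
  obtain ⟨r, hr, hrV⟩ := isLindelof_univ.elim_countable_subcover V (fun i => (hV i).isOpen)
    fun y _ => mem_iUnion.2 (hcov y)
  obtain ⟨g, rfl⟩ := hr.exists_eq_range <| by
    obtain ⟨i, hi, -⟩ := mem_iUnion₂.1 (hrV (mem_univ y₀))
    exact ⟨i, hi⟩
  have hgcov : ∀ y, ∃ n, y ∈ V (g n) := fun y => by
    simpa using hrV (mem_univ y)
  obtain ⟨N, hN, hmem⟩ := exists_isLocallyConstant_mem_of_isClopen_nat (V ∘ g)
    (fun n => hV (g n)) hgcov
  exact ⟨g ∘ N, hN.comp g, hmem⟩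

theorem exists_isLocallyConstant_mem_of_isOpen [LindelofSpace Y]
    (hB : IsTopologicalBasis {s : Set Y | IsClopen s}) (U : ι → Set Y) (hU : ∀ i, IsOpen (U i))
    (hcov : ∀ y, ∃ i, y ∈ U i) : ∃ f : Y → ι, IsLocallyConstant f ∧ ∀ y, y ∈ U (f y) := by
  choose c hc using hcov
  choose V hV hyV hVU using fun y => hB.exists_subset_of_mem_open (hc y) (hU (c y))
  obtain ⟨f, hf, hmem⟩ := exists_isLocallyConstant_mem_of_isClopen V hV fun y => ⟨y, hyV y⟩
  exact ⟨c ∘ f, hf.comp c, fun y => hVU (f y) (hmem y)⟩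

end LocallyConstantChoice

theorem isLocalHomeomorph_of_eventuallyEq {X Y : Type*} [TopologicalSpace X] [TopologicalSpace Y]
    {φ : Y → X} (h : ∀ y, ∃ e : OpenPartialHomeomorph Y X, y ∈ e.source ∧ φ =ᶠ[𝓝 y] e) :
    IsLocalHomeomorph φ := by
  refine IsLocalHomeomorph.mk φ fun y => ?_
  obtain ⟨e, hye, hφe⟩ := h y
  obtain ⟨W, hφW, hW, hyW⟩ := eventually_nhds_iff.1 hφe
  refine ⟨e.restr W, ?_, fun z hz => ?_⟩
  · rw [e.restr_source' W hW]
    exact ⟨hye, hyW⟩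
  · rw [e.restr_source' W hW] at hz
    exact hφW z hz.2

theorem exists_section_isLocalHomeomorph_general
    {X Y : Type*} [TopologicalSpace X] [TopologicalSpace Y]
    [SecondCountableTopology Y]
    [LocallyCompactSpace Y]
    [T2Space Y]
    [TotallyDisconnectedSpace Y]
    (σ : X → Y) (hsurj : Function.Surjective σ) (hσ : IsLocalHomeomorph σ) :
    ∃ φ : Y → X, (∀ y, σ (φ y) = y) ∧ IsLocalHomeomorph φ := by
  set L : Y → OpenPartialHomeomorph Y X := fun y => hσ.localInverseAt (Function.surjInv hsurj y)
  have hyL : ∀ y, y ∈ (L y).source := fun y => by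
    simpa [Function.surjInv_eq hsurj y] using
      hσ.apply_self_mem_localInverseAt_source (x := Function.surjInv hsurj y)
  obtain ⟨c, hc, hmem⟩ :=
    exists_isLocallyConstant_mem_of_isOpen loc_compact_Haus_tot_disc_of_zero_dim
      (fun y => (L y).source) (fun y => (L y).open_source) fun y => ⟨y, hyL y⟩
  refine ⟨fun y => L (c y) y, fun y => hσ.apply_localInverseAt_of_mem (hmem y), ?_⟩
  refine isLocalHomeomorph_of_eventuallyEq fun y => ⟨L (c y), hmem y, ?_⟩
  filter_upwards [hc.eventually_eq y] with z hz
  rw [hz]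

/-- Let `X` and `Y` be second-countable, locally compact, Hausdorff,
totally disconnected spaces and `σ : X → Y` a surjective local homeomorphism.
Then `σ` admits a section `φ : Y → X` that is a local homeomorphism. -/
theorem exists_section_isLocalHomeomorph
    {X Y : Type*} [TopologicalSpace X] [TopologicalSpace Y]
    [SecondCountableTopology X] [SecondCountableTopology Y]
    [LocallyCompactSpace X] [LocallyCompactSpace Y]
    [T2Space X] [T2Space Y]
    [TotallyDisconnectedSpace X] [TotallyDisconnectedSpace Y]
    (σ : X → Y) (hsurj : Function.Surjective σ) (hσ : IsLocalHomeomorph σ) :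
    ∃ φ : Y → X, (∀ y, σ (φ y) = y) ∧ IsLocalHomeomorph φ :=
  exists_section_isLocalHomeomorph_general σ hsurj hσ
end

section
/- Let σ : X → Y be a covering map between second-countable, locally compact, Hausdorff, totally disconnected spaces, and let φ : Y → X be a section of σ that is a local homeomorphism. Then for every y ∈ Y there exist a compact open neighbourhood W of y, some n ∈ ℕ₊ ∪ {∞}, and pairwise disjoint compact open subsets U₁, U₂, … of X such that σ⁻¹(W) = ⋃ᵢ Uᵢ, each σ|Uᵢ : Uᵢ → W is a homeomorphism, and φ(W) = σ⁻¹(W) ∩ φ(Y) = U₁. -/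
/-!
Over any part of the base of a trivialization of `σ` near `y`, the preimage splits into pairwise
disjoint sheets indexed by the fibre, each mapped homeomorphically onto the base by `σ`; the fibre
is discrete in the second-countable space `X`, hence countable. By continuity `φ` maps a small
neighbourhood of `y` into the sheet through `φ y`, and a section landing in a sheet fills it, since
`σ` is injective on sheets. Local compactness and total disconnectedness of `Y` let that
neighbourhood be chosen compact open.
-/

open Set Function Topology

theorem exists_isCompact_isOpen_subset_of_mem_nhds {Y : Type*} [TopologicalSpace Y]
    [LocallyCompactSpace Y] [T2Space Y] [TotallyDisconnectedSpace Y] {y : Y} {s : Set Y}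
    (hs : s ∈ 𝓝 y) : ∃ W ⊆ s, IsCompact W ∧ IsOpen W ∧ y ∈ W := by
  obtain ⟨K, hK, hKs, hKc⟩ := LocallyCompactSpace.local_compact_nhds y s hs
  obtain ⟨W, hW, hyW, hWK⟩ := loc_compact_Haus_tot_disc_of_zero_dim.mem_nhds_iff.1 hK
  exact ⟨W, hWK.trans hKs, hKc.of_isClosed_subset hW.1 hWK, hW.2, hyW⟩

namespace Bundle.Trivialization

variable {B F Z : Type*} [TopologicalSpace B] [TopologicalSpace F] [TopologicalSpace Z]
  {proj : Z → B} (e : Trivialization F proj)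

def sheet (s : Set B) (i : F) : Set Z :=
  proj ⁻¹' s ∩ {z | (e z).2 = i}

theorem iUnion_sheet (s : Set B) : ⋃ i, e.sheet s i = proj ⁻¹' s := by
  ext z
  simp [sheet]

theorem pairwise_disjoint_sheet (s : Set B) : Pairwise (Disjoint on e.sheet s) :=
  fun _ _ hij => disjoint_left.2 fun _ hi hj => hij (hi.2.symm.trans hj.2)

variable {e} {s : Set B}

theorem sheet_subset_source (hs : s ⊆ e.baseSet) (i : F) : e.sheet s i ⊆ e.source :=
  fun _ hz => e.mem_source.2 (hs hz.1)

theorem isOpen_sheet [DiscreteTopology F] (hso : IsOpen s) (hs : s ⊆ e.baseSet) (i : F) :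
    IsOpen (e.sheet s i) := by
  have : e.sheet s i = e.source ∩ e ⁻¹' (s ×ˢ {i}) := by
    ext z
    refine ⟨fun hz => ⟨sheet_subset_source hs i hz, ?_, hz.2⟩, fun ⟨hz, hzs, hzi⟩ => ⟨?_, hzi⟩⟩
    · rw [e.coe_fst (sheet_subset_source hs i hz)]
      exact hz.1
    · show proj z ∈ s
      rw [← e.coe_fst hz]
      exact hzs
  rw [this]
  exact e.isOpen_inter_preimage (hso.prod (isOpen_discrete _))

theorem symm_mem_sheet (hs : s ⊆ e.baseSet) (i : F) {b : B} (hb : b ∈ s) :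
    e.toOpenPartialHomeomorph.symm (b, i) ∈ e.sheet s i :=
  ⟨by rw [mem_preimage, e.proj_symm_apply' (hs hb)]; exact hb,
    by rw [mem_ofPred_eq, e.apply_symm_apply' (hs hb)]⟩

noncomputable def sheetHomeomorph (hs : s ⊆ e.baseSet) (i : F) : e.sheet s i ≃ₜ s where
  toFun z := ⟨proj z, z.2.1⟩
  invFun b := ⟨e.toOpenPartialHomeomorph.symm (b, i), symm_mem_sheet hs i b.2⟩
  left_inv z := Subtype.ext <| by
    have h := e.symm_apply_mk_proj (sheet_subset_source hs i z.2)
    rwa [(z.2.2 : (e z).2 = i)] at h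
  right_inv b := Subtype.ext <| e.proj_symm_apply' (hs b.2)
  continuous_toFun := (e.continuousOn_proj.comp_continuous continuous_subtype_val
    fun z => sheet_subset_source hs i z.2).subtype_mk _
  continuous_invFun := (e.toOpenPartialHomeomorph.continuousOn_symm.comp_continuous
    (continuous_subtype_val.prodMk continuous_const)
    fun b => e.mem_target.2 (hs b.2)).subtype_mk _

theorem isCompact_sheet (hsc : IsCompact s) (hs : s ⊆ e.baseSet) (i : F) :
    IsCompact (e.sheet s i) :=
  have := isCompact_iff_compactSpace.1 hsc
  isCompact_iff_compactSpace.2 (e.sheetHomeomorph hs i).symm.compactSpace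

theorem injOn_proj_sheet (hs : s ⊆ e.baseSet) (i : F) : InjOn proj (e.sheet s i) :=
  fun z hz z' hz' h => congrArg Subtype.val
    ((e.sheetHomeomorph hs i).injective (a₁ := ⟨z, hz⟩) (a₂ := ⟨z', hz'⟩) (Subtype.ext h))

theorem image_eq_sheet_of_leftInverse {g : B → Z} (hg : LeftInverse proj g)
    (hs : s ⊆ e.baseSet) {i : F} (hgs : MapsTo g s (e.sheet s i)) : g '' s = e.sheet s i := by
  refine (hgs.image_subset).antisymm fun z hz => ⟨proj z, hz.1, ?_⟩
  exact injOn_proj_sheet hs i (hgs hz.1) hz (hg (proj z))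

end Bundle.Trivialization

theorem coveringMap_section_local_structure_general
    {X Y : Type*} [TopologicalSpace X] [TopologicalSpace Y]
    [SecondCountableTopology X]
    [LocallyCompactSpace Y]
    [T2Space Y]
    [TotallyDisconnectedSpace Y]
    (σ : X → Y) (hσ : IsCoveringMap σ)
    (φ : Y → X) (hsec : ∀ y, σ (φ y) = y) (hφ : IsLocalHomeomorph φ) (y : Y) :
    ∃ (W : Set Y), IsCompact W ∧ IsOpen W ∧ y ∈ W ∧
      ∃ (ι : Type) (_ : Countable ι) (_ : Nonempty ι) (U : ι → Set X) (i₀ : ι),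
        Pairwise (Function.onFun Disjoint U) ∧
        (⋃ i, U i) = σ ⁻¹' W ∧
        (∀ i, IsCompact (U i) ∧ IsOpen (U i) ∧
          ∃ e : (U i) ≃ₜ W, ∀ x : U i, (e x : Y) = σ x) ∧
        φ '' W = σ ⁻¹' W ∩ Set.range φ ∧
        φ '' W = U i₀ := by
  have : Nonempty (σ ⁻¹' {y}) := ⟨⟨φ y, hsec y⟩⟩
  have : DiscreteTopology (σ ⁻¹' {y}) := (hσ y).1
  have : Countable (σ ⁻¹' {y}) := TopologicalSpace.separableSpace_iff_countable.1 inferInstance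
  let e := (hσ y).toTrivialization
  let i₀ := (e (φ y)).2
  have hφy : φ y ∈ e.sheet e.baseSet i₀ :=
    ⟨by rw [mem_preimage, hsec]; exact (hσ y).mem_toTrivialization_baseSet, rfl⟩
  obtain ⟨W, hWφ, hWc, hWo, hyW⟩ := exists_isCompact_isOpen_subset_of_mem_nhds <|
    ((e.isOpen_sheet e.open_baseSet subset_rfl i₀).preimage hφ.continuous).mem_nhds hφy
  have hWe : W ⊆ e.baseSet := fun w hw => hsec w ▸ (hWφ hw).1
  have hφW : MapsTo φ W (e.sheet W i₀) := fun w hw => ⟨by rwa [mem_preimage, hsec], (hWφ hw).2⟩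
  let k := equivShrink.{0} (σ ⁻¹' {y})
  refine ⟨W, hWc, hWo, hyW, Shrink (σ ⁻¹' {y}), .of_equiv _ k, ⟨k i₀⟩,
    fun j => e.sheet W (k.symm j), k i₀,
    (e.pairwise_disjoint_sheet W).comp_of_injective k.symm.injective,
    by rw [k.symm.surjective.iUnion_comp (e.sheet W), e.iUnion_sheet],
    fun j => ⟨e.isCompact_sheet hWc hWe _, e.isOpen_sheet hWo hWe _,
      e.sheetHomeomorph hWe _, fun _ => rfl⟩, ?_, ?_⟩
  · rw [← image_preimage_eq_inter_range, ← preimage_comp,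
      (show LeftInverse σ φ from hsec).comp_eq_id, preimage_id]
  · simpa using e.image_eq_sheet_of_leftInverse hsec hWe hφW

/-- Let `σ : X → Y` be a covering map between second-countable, locally
compact, Hausdorff, totally disconnected spaces and `φ : Y → X` a section of `σ` that is a
local homeomorphism. Then every `y ∈ Y` has a compact open neighbourhood `W` such that
`σ ⁻¹' W` is the union of a countable, nonempty, pairwise disjoint family of compact open
sets `U i`, each mapped homeomorphically onto `W` by `σ`, and the distinguished member
`U i₀` equals `φ '' W = σ ⁻¹' W ∩ φ(Y)`. -/
theorem coveringMap_section_local_structure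
    {X Y : Type*} [TopologicalSpace X] [TopologicalSpace Y]
    [SecondCountableTopology X] [SecondCountableTopology Y]
    [LocallyCompactSpace X] [LocallyCompactSpace Y]
    [T2Space X] [T2Space Y]
    [TotallyDisconnectedSpace X] [TotallyDisconnectedSpace Y]
    (σ : X → Y) (hsurj : Function.Surjective σ) (hσ : IsCoveringMap σ)
    (φ : Y → X) (hsec : ∀ y, σ (φ y) = y) (hφ : IsLocalHomeomorph φ) (y : Y) :
    ∃ (W : Set Y), IsCompact W ∧ IsOpen W ∧ y ∈ W ∧
      ∃ (ι : Type) (_ : Countable ι) (_ : Nonempty ι) (U : ι → Set X) (i₀ : ι),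
        Pairwise (Function.onFun Disjoint U) ∧
        (⋃ i, U i) = σ ⁻¹' W ∧
        (∀ i, IsCompact (U i) ∧ IsOpen (U i) ∧
          ∃ e : (U i) ≃ₜ W, ∀ x : U i, (e x : Y) = σ x) ∧
        φ '' W = σ ⁻¹' W ∩ Set.range φ ∧
        φ '' W = U i₀ :=
  coveringMap_section_local_structure_general σ hσ φ hsec hφ y
end

section
/- Let C ⊂ [0,1] be the Cantor set and X := (2πC ∪ (2πC + 2π)) \ {0, 4π} ⊂ (0, 4π). Let θ : ℝ → S¹ be θ(t) = (cos t, sin t) and σ : X → θ(X) its restriction. Then σ is a surjective local homeomorphism but not a covering map. -/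
/-! `X` lies in `(0, 4π)` and contains `x ± 2π` with `x` whenever that point is still in
`(0, 4π)`, so it is saturated for the local homeomorphism `exp` restricted to the open set
`(0, 4π)`; hence `σ` is a local homeomorphism. Since `0` and `4π` were removed, the fibre over
`exp 2π` is the single point `2π`, whereas the points `exp (2πc)`, `c ∈ C ∩ (0, 1)`, accumulate
at `exp 2π` and have the two preimages `2πc` and `2πc + 2π`. Fibres of a covering map are locally
of constant size. -/

open Real Set Filter Topology

section LocalHomeomorph

variable {X Y : Type*} [TopologicalSpace X] [TopologicalSpace Y] {f : X → Y}

theorem IsLocalHomeomorph.of_isOpenMap_of_isLocallyInjective (hc : Continuous f)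
    (ho : IsOpenMap f) (hi : IsLocallyInjective f) : IsLocalHomeomorph f := by
  refine isLocalHomeomorph_iff_isOpenEmbedding_restrict.mpr fun x => ?_
  obtain ⟨U, hU, hxU, hinj⟩ := hi x
  exact ⟨U, hU.mem_nhds hxU, .of_continuous_injective_isOpenMap (hc.comp continuous_subtype_val)
    hinj.injective (ho.comp hU.isOpenMap_subtype_val)⟩

theorem IsLocalHomeomorph.restrict_image_of_saturated (hf : IsLocalHomeomorph f) {U S : Set X}
    (hU : IsOpen U) (hSU : S ⊆ U) (hsat : U ∩ f ⁻¹' (f '' S) ⊆ S) :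
    IsLocalHomeomorph ((mapsTo_image f S).restrict f S (f '' S)) := by
  refine .of_isOpenMap_of_isLocallyInjective (hf.continuous.restrict _) ?_ fun x => ?_
  · intro V hV
    obtain ⟨W, hW, rfl⟩ := isOpen_induced_iff.mp hV
    have himage : (mapsTo_image f S).restrict f S (f '' S) '' (Subtype.val ⁻¹' W) =
        Subtype.val ⁻¹' (f '' (W ∩ U)) := by
      ext ⟨y, hy⟩
      constructor
      · rintro ⟨⟨s, hs⟩, hsW, h⟩
        exact ⟨s, ⟨hsW, hSU hs⟩, congrArg Subtype.val h⟩
      · rintro ⟨w, ⟨hwW, hwU⟩, rfl⟩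
        exact ⟨⟨w, hsat ⟨hwU, hy⟩⟩, hwW, rfl⟩
    rw [himage]
    exact (hf.isOpenMap _ (hW.inter hU)).preimage continuous_subtype_val
  · obtain ⟨V, hV, hxV, hinj⟩ := hf.isLocallyInjective x
    exact ⟨Subtype.val ⁻¹' V, hV.preimage continuous_subtype_val, hxV,
      fun a ha b hb h => Subtype.ext (hinj ha hb (congrArg Subtype.val h))⟩

end LocalHomeomorph

theorem IsCoveringMap.eventually_subsingleton_fiber {E X : Type*} [TopologicalSpace E]
    [TopologicalSpace X] {f : E → X} (hf : IsCoveringMap f) {x : X}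
    (hx : (f ⁻¹' {x}).Subsingleton) : ∀ᶠ x' in 𝓝 x, (f ⁻¹' {x'}).Subsingleton := by
  obtain ⟨-, U, hxU, hU, -, H, hH⟩ := hf x
  have : Subsingleton (f ⁻¹' {x}) := hx.coe_sort
  filter_upwards [hU.mem_nhds hxU] with x' hx' a ha b hb
  have hHab : H ⟨a, show f a ∈ U from ha ▸ hx'⟩ = H ⟨b, show f b ∈ U from hb ▸ hx'⟩ :=
    Prod.ext (Subtype.ext (by rw [hH, hH, ha, hb])) (Subsingleton.elim _ _)
  exact congrArg Subtype.val (H.injective hHab)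

theorem eq_or_eq_add_two_pi_or_eq_sub_two_pi_of_circleExp_eq {s t : ℝ} (hst : |s - t| < 4 * π)
    (h : Circle.exp s = Circle.exp t) : s = t ∨ s = t + 2 * π ∨ s = t - 2 * π := by
  obtain ⟨m, hm⟩ := Circle.exp_eq_exp.mp h
  have hm' : |(m : ℝ)| * (2 * π) < 2 * (2 * π) := by
    rw [hm, add_sub_cancel_left, abs_mul, abs_of_pos two_pi_pos] at hst
    linarith
  have : |m| < 2 := by exact_mod_cast lt_of_mul_lt_mul_right hm' two_pi_pos.le
  rcases (by rw [abs_lt] at this; omega : m = 0 ∨ m = 1 ∨ m = -1) with rfl | rfl | rfl <;>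
    push_cast at hm
  · exact .inl (by linarith)
  · exact .inr (.inl (by linarith))
  · exact .inr (.inr (by linarith))

theorem eq_two_pi_of_circleExp_eq {x : ℝ} (hx : x ∈ Ioo 0 (4 * π))
    (h : Circle.exp x = Circle.exp (2 * π)) : x = 2 * π := by
  have hx' : |x - 2 * π| < 4 * π :=
    abs_sub_lt_iff.mpr ⟨by linarith [hx.2, pi_pos], by linarith [hx.1, pi_pos]⟩
  rcases eq_or_eq_add_two_pi_or_eq_sub_two_pi_of_circleExp_eq hx' h with h | h | h
  · exact h
  · linarith [hx.2]
  · linarith [hx.1]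

def twoTurns (D : Set ℝ) : Set ℝ :=
  ((fun c : ℝ => 2 * π * c) '' D ∪ (fun c : ℝ => 2 * π * c + 2 * π) '' D) \ {0, 4 * π}

section TwoTurns

variable {D : Set ℝ}

theorem twoTurns_subset_Ioo (hD : D ⊆ Icc 0 1) : twoTurns D ⊆ Ioo 0 (4 * π) := by
  have := pi_pos
  rintro _ ⟨⟨c, hc, rfl⟩ | ⟨c, hc, rfl⟩, hne⟩ <;> obtain ⟨hc0, hc1⟩ := hD hc
  · exact ⟨lt_of_le_of_ne (by positivity) fun h => hne (.inl h.symm), by nlinarith⟩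
  · exact ⟨by positivity, lt_of_le_of_ne (by nlinarith) fun h => hne (.inr h)⟩

theorem mem_twoTurns_of_mem_Ioo {x : ℝ}
    (hx : x ∈ (fun c : ℝ => 2 * π * c) '' D ∪ (fun c : ℝ => 2 * π * c + 2 * π) '' D)
    (hx' : x ∈ Ioo 0 (4 * π)) : x ∈ twoTurns D :=
  ⟨hx, by rintro (h | h); exacts [hx'.1.ne' h, hx'.2.ne h]⟩

theorem add_two_pi_mem_twoTurns (hD : D ⊆ Icc 0 1) {x : ℝ} (hx : x ∈ twoTurns D)
    (hlt : x < 2 * π) : x + 2 * π ∈ twoTurns D := by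
  have hpos := (twoTurns_subset_Ioo hD hx).1
  obtain ⟨⟨c, hc, rfl⟩ | ⟨c, hc, rfl⟩, -⟩ := hx
  · exact mem_twoTurns_of_mem_Ioo (.inr ⟨c, hc, rfl⟩) ⟨by linarith, by linarith⟩
  · nlinarith [(hD hc).1, pi_pos]

theorem sub_two_pi_mem_twoTurns (hD : D ⊆ Icc 0 1) {x : ℝ} (hx : x ∈ twoTurns D)
    (hgt : 2 * π < x) : x - 2 * π ∈ twoTurns D := by
  have hlt := (twoTurns_subset_Ioo hD hx).2
  obtain ⟨⟨c, hc, rfl⟩ | ⟨c, hc, rfl⟩, -⟩ := hx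
  · nlinarith [(hD hc).2, pi_pos]
  · exact mem_twoTurns_of_mem_Ioo (.inl ⟨c, hc, by ring⟩) ⟨by linarith, by linarith⟩

theorem twoTurns_saturated (hD : D ⊆ Icc 0 1) :
    Ioo 0 (4 * π) ∩ Circle.exp ⁻¹' (Circle.exp '' twoTurns D) ⊆ twoTurns D := by
  rintro t ⟨ht, x, hx, hxt⟩
  have hx' := twoTurns_subset_Ioo hD hx
  have hdist : |t - x| < 4 * π :=
    abs_sub_lt_iff.mpr ⟨by linarith [ht.2, hx'.1], by linarith [ht.1, hx'.2]⟩
  rcases eq_or_eq_add_two_pi_or_eq_sub_two_pi_of_circleExp_eq hdist hxt.symm with rfl | rfl | rfl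
  · exact hx
  · exact add_two_pi_mem_twoTurns hD hx (by linarith [ht.2])
  · exact sub_two_pi_mem_twoTurns hD hx (by linarith [ht.1])

theorem two_pi_mem_twoTurns (h0 : (0 : ℝ) ∈ D) : 2 * π ∈ twoTurns D :=
  mem_twoTurns_of_mem_Ioo (.inr ⟨0, h0, by ring⟩) ⟨two_pi_pos, by linarith [pi_pos]⟩

theorem two_pi_mul_add_two_pi_mem_twoTurns {c : ℝ} (hc : c ∈ D ∩ Ioo 0 1) :
    2 * π * c + 2 * π ∈ twoTurns D := by
  obtain ⟨hcD, hc0, hc1⟩ := hc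
  exact mem_twoTurns_of_mem_Ioo (.inr ⟨c, hcD, rfl⟩) ⟨by positivity, by nlinarith [pi_pos]⟩

theorem isLocalHomeomorph_circleExp_restrict_twoTurns (hD : D ⊆ Icc 0 1) :
    IsLocalHomeomorph ((mapsTo_image Circle.exp (twoTurns D)).restrict _ _ _) :=
  isLocalHomeomorph_circleExp.restrict_image_of_saturated isOpen_Ioo (twoTurns_subset_Ioo hD)
    (twoTurns_saturated hD)

theorem not_isCoveringMap_circleExp_restrict_twoTurns (hD : D ⊆ Icc 0 1) (h0 : (0 : ℝ) ∈ D)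
    {c : ℕ → ℝ} (hc : ∀ n, c n ∈ D ∩ Ioo 0 1) (hlim : Tendsto c atTop (𝓝 0)) :
    ¬ IsCoveringMap ((mapsTo_image Circle.exp (twoTurns D)).restrict _ _ _) := by
  set ρ := (mapsTo_image Circle.exp (twoTurns D)).restrict _ _ _
  intro hcov
  have h2π := two_pi_mem_twoTurns h0
  have hfib : (ρ ⁻¹' {ρ ⟨2 * π, h2π⟩}).Subsingleton := by
    intro a ha b hb
    have hval : ∀ x ∈ ρ ⁻¹' {ρ ⟨2 * π, h2π⟩}, (x : ℝ) = 2 * π := fun x hx =>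
      eq_two_pi_of_circleExp_eq (twoTurns_subset_Ioo hD x.2) (congrArg Subtype.val hx)
    exact Subtype.ext ((hval a ha).trans (hval b hb).symm)
  let x : ℕ → twoTurns D := fun n =>
    ⟨2 * π * c n + 2 * π, two_pi_mul_add_two_pi_mem_twoTurns (hc n)⟩
  have hx : Tendsto x atTop (𝓝 ⟨2 * π, h2π⟩) :=
    tendsto_subtype_rng.mpr (by simpa using (hlim.const_mul (2 * π)).add_const (2 * π))
  have hρx : Tendsto (ρ ∘ x) atTop (𝓝 (ρ ⟨2 * π, h2π⟩)) := (hcov.continuous.tendsto _).comp hx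
  obtain ⟨n, hn⟩ := (hρx.eventually (hcov.eventually_subsingleton_fiber hfib)).exists
  have hlow : 2 * π * c n ∈ twoTurns D := by
    convert sub_two_pi_mem_twoTurns hD (x n).2 (by simp [x, (hc n).2.1, pi_pos]) using 1
    simp [x]
  have hsame : ρ ⟨2 * π * c n, hlow⟩ = ρ (x n) := Subtype.ext (Circle.exp_add_two_pi _).symm
  have hne : (⟨2 * π * c n, hlow⟩ : twoTurns D) ≠ x n := fun h => by
    simpa [x, pi_pos.ne'] using congrArg Subtype.val h
  exact hne (hn hsame rfl)

end TwoTurns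

theorem div_three_pow_mem_cantorSet {x : ℝ} (hx : x ∈ cantorSet) (n : ℕ) :
    x / 3 ^ n ∈ cantorSet := by
  induction n with
  | zero => simpa using hx
  | succ n ih =>
    rw [pow_succ, ← div_div, cantorSet_eq_union_halves]
    exact .inl ⟨_, ih, rfl⟩

open Real in
/-- Let `C ⊆ [0,1]` be the ternary Cantor set and
`X := (2πC ∪ (2πC + 2π)) \ {0, 4π}`. The restriction `σ` of the map
`θ(t) = (cos t, sin t)` (i.e. `Circle.exp`) to a map `X → θ(X)` is a surjective local
homeomorphism but not a covering map. -/
theorem cantor_restriction_not_coveringMap :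
    ∀ (Xset : Set ℝ), Xset =
        ((fun c : ℝ => 2 * π * c) '' cantorSet ∪
          (fun c : ℝ => 2 * π * c + 2 * π) '' cantorSet) \ {0, 4 * π} →
    ∀ (σ : Xset → (Circle.exp '' Xset : Set Circle)),
      (∀ x : Xset, (σ x : Circle) = Circle.exp (x : ℝ)) →
      Function.Surjective σ ∧ IsLocalHomeomorph σ ∧ ¬ IsCoveringMap σ := by
  rintro Xset rfl σ hσ
  obtain rfl : σ = (mapsTo_image Circle.exp (twoTurns cantorSet)).restrict _ _ _ :=
    funext fun x => Subtype.ext (hσ x)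
  have hquarter (n : ℕ) : 1 / 4 / 3 ^ n ∈ cantorSet ∩ Ioo 0 1 :=
    ⟨div_three_pow_mem_cantorSet quarter_mem_cantorSet n, by positivity,
      (div_le_self (by norm_num) (one_le_pow₀ (by norm_num))).trans_lt (by norm_num)⟩
  have hlim : Tendsto (fun n : ℕ => 1 / 4 / (3 : ℝ) ^ n) atTop (𝓝 0) :=
    tendsto_const_nhds.div_atTop (tendsto_pow_atTop_atTop_of_one_lt (by norm_num))
  exact ⟨surjective_mapsTo_image_restrict _ _,
    isLocalHomeomorph_circleExp_restrict_twoTurns cantorSet_subset_unitInterval,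
    not_isCoveringMap_circleExp_restrict_twoTurns cantorSet_subset_unitInterval
      zero_mem_cantorSet hquarter hlim⟩
end

section
/- The map θ : ℝ → S¹, θ(t) = (cos t, sin t), restricted to X := (2πC ∪ (2πC + 2π)) \ {0, 4π} (C the Cantor set) has the property that the point (1,0) ∈ θ(X) has a unique preimage in X, namely 2π, while every neighbourhood of (1,0) in θ(X) contains points with at least two preimages in X. -/
/-!
Every point of `X` (`doubledCantorSet`) lies in `(0, 4π)`, where `θ` takes the value `(1,0)`
only at `2π`; and `2π = 2π · 1` is in `X`. On the other hand the Cantor points `c = 1 - 3⁻ᵐ`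
lie in `(0, 1)` and tend to `1`, so `2πc` and `2πc + 2π` are two distinct points of `X` with
the same image, and that image tends to `θ(2π) = (1,0)`.
-/

open Real Filter Topology

lemma one_sub_inv_three_pow_mem_preCantorSet (n m : ℕ) : 1 - (3 : ℝ)⁻¹ ^ m ∈ preCantorSet n := by
  induction n generalizing m with
  | zero =>
    have hpos : 0 < (3 : ℝ)⁻¹ ^ m := by positivity
    have hle : (3 : ℝ)⁻¹ ^ m ≤ 1 := pow_le_one₀ (by norm_num) (by norm_num)
    exact ⟨by linarith, by linarith⟩
  | succ n ih =>
    cases m with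
    | zero => exact Or.inl ⟨0, zero_mem_preCantorSet n, by norm_num⟩
    | succ m => exact Or.inr ⟨1 - (3 : ℝ)⁻¹ ^ m, ih m, by rw [pow_succ]; ring⟩

lemma one_sub_inv_three_pow_mem_cantorSet (m : ℕ) : 1 - (3 : ℝ)⁻¹ ^ m ∈ cantorSet :=
  Set.mem_iInter.mpr fun n => one_sub_inv_three_pow_mem_preCantorSet n m

lemma tendsto_one_sub_inv_three_pow :
    Tendsto (fun m : ℕ => 1 - (3 : ℝ)⁻¹ ^ m) atTop (𝓝 1) := by
  simpa using tendsto_const_nhds.sub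
    (tendsto_pow_atTop_nhds_zero_of_lt_one (by norm_num : (0 : ℝ) ≤ 3⁻¹) (by norm_num))

lemma one_mem_cantorSet : (1 : ℝ) ∈ cantorSet :=
  isClosed_cantorSet.mem_of_tendsto tendsto_one_sub_inv_three_pow
    (Eventually.of_forall one_sub_inv_three_pow_mem_cantorSet)

lemma Circle.eq_two_pi_of_exp_eq_one {x : ℝ} (h0 : 0 < x) (h4 : x < 4 * π)
    (hx : Circle.exp x = 1) : x = 2 * π := by
  obtain ⟨n, rfl⟩ := Circle.exp_eq_one.mp hx
  have hn0 : (0 : ℝ) < n := pos_of_mul_pos_left h0 (by positivity)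
  have hn2 : (n : ℝ) < 2 := by nlinarith [pi_pos]
  have hn : n = 1 := by
    have := Int.cast_pos.mp hn0
    have : n < 2 := by exact_mod_cast hn2
    omega
  simp [hn]

noncomputable def doubledCantorSet : Set ℝ :=
  ((fun c : ℝ => 2 * π * c) '' cantorSet ∪ (fun c : ℝ => 2 * π * c + 2 * π) '' cantorSet) \
    {0, 4 * π}

lemma doubledCantorSet_subset_Ioo : doubledCantorSet ⊆ Set.Ioo 0 (4 * π) := by
  rintro x ⟨hx, hx04⟩
  simp only [Set.mem_insert_iff, Set.mem_singleton_iff, not_or] at hx04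
  have hIcc : 0 ≤ x ∧ x ≤ 4 * π := by
    rcases hx with ⟨c, hc, rfl⟩ | ⟨c, hc, rfl⟩ <;>
      obtain ⟨hc0, hc1⟩ := cantorSet_subset_unitInterval hc <;>
      constructor <;> nlinarith [pi_pos]
  exact ⟨lt_of_le_of_ne hIcc.1 (Ne.symm hx04.1), lt_of_le_of_ne hIcc.2 hx04.2⟩

lemma two_pi_mul_mem_doubledCantorSet {c : ℝ} (hc : c ∈ cantorSet) (hc0 : 0 < c) :
    2 * π * c ∈ doubledCantorSet := by
  refine ⟨Or.inl ⟨c, hc, rfl⟩, ?_⟩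
  have hc1 := (cantorSet_subset_unitInterval hc).2
  simp only [Set.mem_insert_iff, Set.mem_singleton_iff, not_or]
  constructor <;> intro h <;> nlinarith [pi_pos]

lemma two_pi_mul_add_two_pi_mem_doubledCantorSet {c : ℝ} (hc : c ∈ cantorSet) (hc1 : c < 1) :
    2 * π * c + 2 * π ∈ doubledCantorSet := by
  refine ⟨Or.inr ⟨c, hc, rfl⟩, ?_⟩
  have hc0 := (cantorSet_subset_unitInterval hc).1
  simp only [Set.mem_insert_iff, Set.mem_singleton_iff, not_or]
  constructor <;> intro h <;> nlinarith [pi_pos]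

lemma doubledCantorSet_sep_exp_eq_one :
    {x ∈ doubledCantorSet | Circle.exp x = 1} = {2 * π} := by
  ext x
  constructor
  · rintro ⟨hx, hexp⟩
    exact Circle.eq_two_pi_of_exp_eq_one (doubledCantorSet_subset_Ioo hx).1
      (doubledCantorSet_subset_Ioo hx).2 hexp
  · rintro rfl
    exact ⟨by simpa using two_pi_mul_mem_doubledCantorSet one_mem_cantorSet one_pos,
      Circle.exp_two_pi⟩

lemma one_sub_inv_three_pow_succ_mem_Ioo (m : ℕ) : 1 - (3 : ℝ)⁻¹ ^ (m + 1) ∈ Set.Ioo 0 1 := by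
  have hpos : 0 < (3 : ℝ)⁻¹ ^ (m + 1) := by positivity
  have hlt : (3 : ℝ)⁻¹ ^ (m + 1) < 1 := pow_lt_one₀ (by norm_num) (by norm_num) m.succ_ne_zero
  exact ⟨by linarith, by linarith⟩

lemma tendsto_exp_two_pi_mul_one_sub_inv_three_pow :
    Tendsto (fun m : ℕ => Circle.exp (2 * π * (1 - (3 : ℝ)⁻¹ ^ (m + 1)))) atTop (𝓝 1) := by
  have h := (Circle.exp.continuous.tendsto (2 * π * 1)).comp
    ((tendsto_one_sub_inv_three_pow.comp (tendsto_add_atTop_nat 1)).const_mul (2 * π))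
  simpa [Function.comp_def] using h

lemma exists_two_preimages_doubledCantorSet {c : ℝ} (hc : c ∈ cantorSet)
    (hc01 : c ∈ Set.Ioo 0 1) :
    ∃ x₁ ∈ doubledCantorSet, ∃ x₂ ∈ doubledCantorSet, x₁ ≠ x₂ ∧
      Circle.exp x₁ = Circle.exp (2 * π * c) ∧ Circle.exp x₂ = Circle.exp (2 * π * c) :=
  ⟨_, two_pi_mul_mem_doubledCantorSet hc hc01.1, _,
    two_pi_mul_add_two_pi_mem_doubledCantorSet hc hc01.2, by linarith [pi_pos], rfl,
    Circle.exp_add_two_pi _⟩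

open Real in
/-- With `C` the ternary Cantor set,
`X := (2πC ∪ (2πC + 2π)) \ {0, 4π}` and `θ = Circle.exp`, the point `(1,0) ∈ θ(X)` has
the unique preimage `2π` in `X`, while every neighbourhood of `(1,0)` in `θ(X)` contains
points having at least two preimages in `X`. -/
theorem cantor_restriction_unique_preimage_at_one :
    ∀ (Xset : Set ℝ), Xset =
        ((fun c : ℝ => 2 * π * c) '' cantorSet ∪
          (fun c : ℝ => 2 * π * c + 2 * π) '' cantorSet) \ {0, 4 * π} →
    ∀ (h1 : (1 : Circle) ∈ (Circle.exp '' Xset : Set Circle)),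
      ({x ∈ Xset | Circle.exp x = 1} = {2 * π}) ∧
      ∀ V ∈ nhds (⟨1, h1⟩ : (Circle.exp '' Xset : Set Circle)),
        ∃ z : (Circle.exp '' Xset : Set Circle), z ∈ V ∧
          ∃ x₁ ∈ Xset, ∃ x₂ ∈ Xset, x₁ ≠ x₂ ∧
            Circle.exp x₁ = (z : Circle) ∧ Circle.exp x₂ = (z : Circle) := by
  intro Xset hX h1
  subst hX
  refine ⟨doubledCantorSet_sep_exp_eq_one, fun V hV => ?_⟩
  have hmem (m : ℕ) : Circle.exp (2 * π * (1 - (3 : ℝ)⁻¹ ^ (m + 1))) ∈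
      Circle.exp '' doubledCantorSet :=
    ⟨_, two_pi_mul_mem_doubledCantorSet (one_sub_inv_three_pow_mem_cantorSet _)
      (one_sub_inv_three_pow_succ_mem_Ioo m).1, rfl⟩
  have hlim : Tendsto (fun m => (⟨_, hmem m⟩ : Circle.exp '' doubledCantorSet)) atTop
      (𝓝 ⟨1, h1⟩) :=
    tendsto_subtype_rng.mpr tendsto_exp_two_pi_mul_one_sub_inv_three_pow
  obtain ⟨m, hm⟩ := (hlim.eventually_mem hV).exists
  exact ⟨_, hm, exists_two_preimages_doubledCantorSet (one_sub_inv_three_pow_mem_cantorSet _)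
    (one_sub_inv_three_pow_succ_mem_Ioo m)⟩
end

section
/- Let σ : X → Y be a surjective continuous map and suppose Y = ⊔ᵢ Wᵢ is a partition into open sets such that for each i, σ⁻¹(Wᵢ) = ⊔_{j ∈ Jᵢ} Uⱼ⁽ⁱ⁾ is a partition into open sets with each σ|_{Uⱼ⁽ⁱ⁾} : Uⱼ⁽ⁱ⁾ → Wᵢ a homeomorphism. Then the map ρ : R(σ) → ⊔ᵢ (Wᵢ × Jᵢ × Jᵢ) sending (u, v) to (σ(u), j, k), where u ∈ Uⱼ⁽ⁱ⁾ and v ∈ Uₖ⁽ⁱ⁾, is a well-defined homeomorphism, where R(σ) = {(u,v) ∈ X × X : σ(u) = σ(v)} has the subspace topology from X × X and the codomain has the disjoint-union/product topology. -/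
/-! Over each `Wᵢ` the map `σ` is a trivial covering with fibre `Jᵢ`: a point `u` of `σ⁻¹(Wᵢ)`
is determined by `σ u` together with the unique sheet `Uⱼ⁽ⁱ⁾` containing it. A pair `(u, v)` with
`σ u = σ v` is therefore determined by `(σ u, j, k)`, and conversely every `(w, j, k)` comes from
the pair of lifts of `w` to the sheets `j` and `k`. The sheet indices are locally constant, since
the sheets are open, and the lifts depend continuously on `w`, since `σ` is a homeomorphism on each
sheet; so both directions are continuous. -/

open Function Set

namespace KernelPairSheets

variable {X Y ι : Type*} {J : ι → Type*} {σ : X → Y} {W : ι → Set Y} {U : ∀ i, J i → Set X}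

theorem sigma_eq_of_mem_of_mem
    (hUdisj : Pairwise (Disjoint on fun c : Σ i, J i ↦ U c.1 c.2))
    {x : X} {i i' : ι} {j : J i} {j' : J i'} (h : x ∈ U i j) (h' : x ∈ U i' j') :
    (⟨i, j⟩ : Σ i, J i) = ⟨i', j'⟩ := by
  by_contra hne
  exact disjoint_left.mp (hUdisj hne) h h'

theorem mem_of_mem_sheet (hUcover : ∀ i, (⋃ j, U i j) = σ ⁻¹' (W i)) {x : X} {i : ι} {j : J i}
    (h : x ∈ U i j) : σ x ∈ W i := by
  rw [← mem_preimage, ← hUcover]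
  exact mem_iUnion_of_mem j h

variable (σ U) in
def IsSheetCoords (p : X × X) (q : Σ i, W i × J i × J i) : Prop :=
  (q.2.1 : Y) = σ p.1 ∧ p.1 ∈ U q.1 q.2.2.1 ∧ p.2 ∈ U q.1 q.2.2.2

theorem isSheetCoords_mk (hUcover : ∀ i, (⋃ j, U i j) = σ ⁻¹' (W i)) {p : X × X} {i : ι}
    {j k : J i} (hj : p.1 ∈ U i j) (hk : p.2 ∈ U i k) :
    IsSheetCoords σ U p ⟨i, ⟨σ p.1, mem_of_mem_sheet hUcover hj⟩, j, k⟩ :=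
  ⟨rfl, hj, hk⟩

theorem exists_isSheetCoords (hWcover : (⋃ i, W i) = univ)
    (hUcover : ∀ i, (⋃ j, U i j) = σ ⁻¹' (W i)) {p : X × X} (hp : σ p.1 = σ p.2) :
    ∃ q : Σ i, W i × J i × J i, IsSheetCoords σ U p q := by
  obtain ⟨i, hi⟩ := mem_iUnion.mp (hWcover.symm ▸ mem_univ (σ p.1))
  have hcover (x : X) (hx : σ x ∈ W i) : ∃ j, x ∈ U i j := by
    rwa [← mem_iUnion, hUcover]
  obtain ⟨j, hj⟩ := hcover p.1 hi
  obtain ⟨k, hk⟩ := hcover p.2 (hp ▸ hi)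
  exact ⟨_, isSheetCoords_mk hUcover hj hk⟩

theorem IsSheetCoords.unique
    (hUdisj : Pairwise (Disjoint on fun c : Σ i, J i ↦ U c.1 c.2))
    {p : X × X} {q q' : Σ i, W i × J i × J i}
    (hq : IsSheetCoords σ U p q) (hq' : IsSheetCoords σ U p q') : q = q' := by
  obtain ⟨i, w, j, k⟩ := q
  obtain ⟨i', w', j', k'⟩ := q'
  obtain ⟨hii', hjj'⟩ := Sigma.mk.inj_iff.mp (sigma_eq_of_mem_of_mem hUdisj hq.2.1 hq'.2.1)
  subst hii'
  obtain ⟨-, hkk'⟩ := Sigma.mk.inj_iff.mp (sigma_eq_of_mem_of_mem hUdisj hq.2.2 hq'.2.2)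
  obtain rfl := eq_of_heq hjj'
  obtain rfl := eq_of_heq hkk'
  obtain rfl : w = w' := Subtype.ext (hq.1.trans hq'.1.symm)
  rfl

variable [TopologicalSpace X] [TopologicalSpace Y]

theorem coe_symm_apply_eq {s : Set X} {t : Set Y} {e : s ≃ₜ t} (he : ∀ x, (e x : Y) = σ x)
    {x : X} (hx : x ∈ s) {y : t} (hy : (y : Y) = σ x) : (e.symm y : X) = x := by
  obtain rfl : y = e ⟨x, hx⟩ := Subtype.ext (hy.trans (he ⟨x, hx⟩).symm)
  rw [e.symm_apply_apply]

theorem apply_coe_symm {s : Set X} {t : Set Y} {e : s ≃ₜ t} (he : ∀ x, (e x : Y) = σ x)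
    (y : t) : σ (e.symm y) = y := by
  rw [← he, e.apply_symm_apply]

variable {e : ∀ i j, U i j ≃ₜ W i}

variable (e) in
def sheetLifts (q : Σ i, W i × J i × J i) : X × X :=
  ((e q.1 q.2.2.1).symm q.2.1, (e q.1 q.2.2.2).symm q.2.1)


theorem apply_sheetLifts_fst (he : ∀ i j (x : U i j), (e i j x : Y) = σ x)
    (q : Σ i, W i × J i × J i) : σ (sheetLifts e q).1 = q.2.1 :=
  apply_coe_symm (he _ _) _

theorem apply_sheetLifts_snd (he : ∀ i j (x : U i j), (e i j x : Y) = σ x)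
    (q : Σ i, W i × J i × J i) : σ (sheetLifts e q).2 = q.2.1 :=
  apply_coe_symm (he _ _) _

theorem isSheetCoords_sheetLifts (he : ∀ i j (x : U i j), (e i j x : Y) = σ x)
    (q : Σ i, W i × J i × J i) : IsSheetCoords σ U (sheetLifts e q) q :=
  ⟨(apply_sheetLifts_fst he q).symm, ((e _ _).symm _).2, ((e _ _).symm _).2⟩

theorem sheetLifts_eq (he : ∀ i j (x : U i j), (e i j x : Y) = σ x) {p : X × X}
    (hp : σ p.1 = σ p.2) {q : Σ i, W i × J i × J i} (hq : IsSheetCoords σ U p q) :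
    sheetLifts e q = p :=
  Prod.ext (coe_symm_apply_eq (he _ _) hq.2.1 hq.1)
    (coe_symm_apply_eq (he _ _) hq.2.2 (hq.1.trans hp))

theorem continuous_sheetLifts [∀ i, TopologicalSpace (J i)] [∀ i, DiscreteTopology (J i)] :
    Continuous (sheetLifts e) := by
  refine continuous_sigma fun i ↦ continuous_prod_of_discrete_right.mpr fun jk ↦ ?_
  exact (continuous_subtype_val.comp (e i jk.1).symm.continuous).prodMk
    (continuous_subtype_val.comp (e i jk.2).symm.continuous)

/-- A map to sheet coordinates is continuous: near `p` both points stay in their (open) sheets,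
so only the `W`-coordinate `σ u` moves. -/
theorem continuous_of_isSheetCoords [∀ i, TopologicalSpace (J i)] (hcont : Continuous σ)
    (hUo : ∀ i j, IsOpen (U i j)) (hUcover : ∀ i, (⋃ j, U i j) = σ ⁻¹' (W i))
    (hUdisj : Pairwise (Disjoint on fun c : Σ i, J i ↦ U c.1 c.2))
    {f : {p : X × X // σ p.1 = σ p.2} → Σ i, W i × J i × J i}
    (hf : ∀ p, IsSheetCoords σ U p.1 (f p)) : Continuous f := by
  refine continuous_iff_continuousAt.mpr fun p ↦ ?_
  rcases hq : f p with ⟨i, w, j, k⟩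
  obtain ⟨-, hj, hk⟩ := hq ▸ hf p
  let S : Set {p : X × X // σ p.1 = σ p.2} := {q | q.1.1 ∈ U i j ∧ q.1.2 ∈ U i k}
  have hS : IsOpen S :=
    ((hUo i j).preimage (continuous_fst.comp continuous_subtype_val)).inter
      ((hUo i k).preimage (continuous_snd.comp continuous_subtype_val))
  have hfS : S.domRestrict f = fun q ↦ ⟨i, ⟨σ q.1.1.1, mem_of_mem_sheet hUcover q.2.1⟩, j, k⟩ :=
    funext fun q ↦ (hf q).unique hUdisj (isSheetCoords_mk hUcover q.2.1 q.2.2)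
  have hfS_cont : ContinuousOn f S := by
    rw [continuousOn_iff_continuous_domRestrict, hfS]
    exact continuous_sigmaMk.comp
      (((hcont.comp (continuous_fst.comp (continuous_subtype_val.comp
        continuous_subtype_val))).subtype_mk _).prodMk continuous_const)
  exact hfS_cont.continuousAt (hS.mem_nhds ⟨hj, hk⟩)

theorem exists_homeomorph_isSheetCoords [∀ i, TopologicalSpace (J i)]
    [∀ i, DiscreteTopology (J i)] (hcont : Continuous σ) (hWcover : (⋃ i, W i) = univ)
    (hUo : ∀ i j, IsOpen (U i j))
    (hUdisj : Pairwise (Disjoint on fun c : Σ i, J i ↦ U c.1 c.2))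
    (hUcover : ∀ i, (⋃ j, U i j) = σ ⁻¹' (W i)) (he : ∀ i j (x : U i j), (e i j x : Y) = σ x) :
    ∃ ρ : {p : X × X // σ p.1 = σ p.2} ≃ₜ (Σ i, W i × J i × J i),
      ∀ p, IsSheetCoords σ U p.1 (ρ p) := by
  choose f hf using fun p : {p : X × X // σ p.1 = σ p.2} ↦
    exists_isSheetCoords hWcover hUcover p.2
  let g (q : Σ i, W i × J i × J i) : {p : X × X // σ p.1 = σ p.2} :=
    ⟨sheetLifts e q, (apply_sheetLifts_fst he q).trans (apply_sheetLifts_snd he q).symm⟩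
  exact ⟨{ toFun := f
           invFun := g
           left_inv := fun p ↦ Subtype.ext (sheetLifts_eq he p.2 (hf p))
           right_inv := fun q ↦ (hf (g q)).unique hUdisj (isSheetCoords_sheetLifts he q)
           continuous_toFun := continuous_of_isSheetCoords hcont hUo hUcover hUdisj hf
           continuous_invFun := continuous_sheetLifts.subtype_mk _ }, hf⟩

end KernelPairSheets

open KernelPairSheets

theorem kernel_pair_homeomorph_of_partition_general
    {X Y : Type*} [TopologicalSpace X] [TopologicalSpace Y]
    {ι : Type*}
    (J : ι → Type*) [∀ i, TopologicalSpace (J i)]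
    [∀ i, DiscreteTopology (J i)]
    (σ : X → Y) (hcont : Continuous σ)
    (W : ι → Set Y) (hWcover : (⋃ i, W i) = Set.univ)
    (U : ∀ i, J i → Set X) (hUo : ∀ i j, IsOpen (U i j))
    (hUdisj : ∀ (i i' : ι) (j : J i) (j' : J i'),
      (⟨i, j⟩ : Σ i, J i) ≠ ⟨i', j'⟩ → Disjoint (U i j) (U i' j'))
    (hUcover : ∀ i, (⋃ j, U i j) = σ ⁻¹' (W i))
    (hhomeo : ∀ i j, ∃ e : (U i j) ≃ₜ (W i), ∀ x : U i j, (e x : Y) = σ x) :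
    ∃ ρ : {p : X × X // σ p.1 = σ p.2} ≃ₜ (Σ i, (W i) × J i × J i),
      ∀ (p : X × X) (hp : σ p.1 = σ p.2) (i : ι) (j k : J i),
        p.1 ∈ U i j → p.2 ∈ U i k →
        ∃ h : σ p.1 ∈ W i, ρ ⟨p, hp⟩ = ⟨i, (⟨σ p.1, h⟩, j, k)⟩ := by
  choose e he using hhomeo
  have hUdisj' : Pairwise (Disjoint on fun c : Σ i, J i ↦ U c.1 c.2) :=
    fun c c' ↦ hUdisj c.1 c'.1 c.2 c'.2
  obtain ⟨ρ, hρ⟩ := exists_homeomorph_isSheetCoords hcont hWcover hUo hUdisj' hUcover he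
  refine ⟨ρ, fun p hp i j k hj hk ↦ ⟨mem_of_mem_sheet hUcover hj, ?_⟩⟩
  exact (hρ ⟨p, hp⟩).unique hUdisj' (isSheetCoords_mk hUcover hj hk)

/-- Let `σ : X → Y` be a continuous surjection, `Y = ⊔ᵢ Wᵢ` a partition
into open sets, and for each `i` let `σ ⁻¹' Wᵢ = ⊔_{j ∈ Jᵢ} Uⱼ⁽ⁱ⁾` be a partition into
open sets with each `σ` restricting to a homeomorphism `Uⱼ⁽ⁱ⁾ ≃ₜ Wᵢ` (the `Jᵢ` countable
and discrete). Then the map `ρ : R(σ) → ⊔ᵢ (Wᵢ × Jᵢ × Jᵢ)`, `(u,v) ↦ (σ u, j, k)` for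
`u ∈ Uⱼ⁽ⁱ⁾`, `v ∈ Uₖ⁽ⁱ⁾`, is a well-defined homeomorphism, where `R(σ)` carries the
subspace topology of `X × X` and the codomain the disjoint-union/product topology. -/
theorem kernel_pair_homeomorph_of_partition
    {X Y : Type*} [TopologicalSpace X] [TopologicalSpace Y]
    {ι : Type*} [Countable ι]
    (J : ι → Type*) [∀ i, Countable (J i)] [∀ i, TopologicalSpace (J i)]
    [∀ i, DiscreteTopology (J i)]
    (σ : X → Y) (hcont : Continuous σ) (hsurj : Function.Surjective σ)
    (W : ι → Set Y) (hWo : ∀ i, IsOpen (W i))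
    (hWdisj : Pairwise (Function.onFun Disjoint W)) (hWcover : (⋃ i, W i) = Set.univ)
    (U : ∀ i, J i → Set X) (hUo : ∀ i j, IsOpen (U i j))
    (hUdisj : ∀ (i i' : ι) (j : J i) (j' : J i'),
      (⟨i, j⟩ : Σ i, J i) ≠ ⟨i', j'⟩ → Disjoint (U i j) (U i' j'))
    (hUcover : ∀ i, (⋃ j, U i j) = σ ⁻¹' (W i))
    (hhomeo : ∀ i j, ∃ e : (U i j) ≃ₜ (W i), ∀ x : U i j, (e x : Y) = σ x) :
    ∃ ρ : {p : X × X // σ p.1 = σ p.2} ≃ₜ (Σ i, (W i) × J i × J i),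
      ∀ (p : X × X) (hp : σ p.1 = σ p.2) (i : ι) (j k : J i),
        p.1 ∈ U i j → p.2 ∈ U i k →
        ∃ h : σ p.1 ∈ W i, ρ ⟨p, hp⟩ = ⟨i, (⟨σ p.1, h⟩, j, k)⟩ :=
  kernel_pair_homeomorph_of_partition_general J σ hcont W hWcover U hUo hUdisj hUcover hhomeo
end

section
/- Let σ : X → Y be a continuous surjection between topological spaces with Y Hausdorff, and suppose G ⊆ X × X is open in R(σ) := {(x,x′) : σ(x) = σ(x′)} (subspace topology). If K ⊆ X is compact open and σ|_{X∖K} is replaced by the identity to form σ_K, then R(σ_K) is open in R(σ), provided σ is a local homeomorphism. -/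
/-- Let `σ : X → Y` be a continuous surjective local homeomorphism,
with `X` second-countable, locally compact, Hausdorff, totally disconnected, and `Y`
Hausdorff. Let `K ⊆ X` be compact open and `σ_K : X → Y ⊕ X` be `σ` on `K` and the
identity off `K`. Then the kernel pair `R(σ_K)` is open in the kernel pair
`R(σ) = {(x,x') : σ x = σ x'}` with its subspace topology from `X × X`. -/
theorem modified_kernel_pair_isOpen_in_kernel_pair
    {X Y : Type*} [TopologicalSpace X] [TopologicalSpace Y]
    [SecondCountableTopology X] [LocallyCompactSpace X] [T2Space X]
    [TotallyDisconnectedSpace X] [T2Space Y]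
    (σ : X → Y) (hcont : Continuous σ) (hsurj : Function.Surjective σ)
    (hσ : IsLocalHomeomorph σ)
    (K : Set X) (hKc : IsCompact K) (hKo : IsOpen K)
    (σK : X → Y ⊕ X)
    (h1 : ∀ x ∈ K, σK x = Sum.inl (σ x))
    (h2 : ∀ x ∉ K, σK x = Sum.inr x) :
    IsOpen {p : {q : X × X // σ q.1 = σ q.2} | σK (p : X × X).1 = σK (p : X × X).2} := by
  rw [isOpen_iff_mem_nhds]
  rintro ⟨⟨a, b⟩, hab⟩ hp
  simp only [Set.mem_setOf_eq] at hp
  by_cases haK : a ∈ K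
  · by_cases hbK : b ∈ K
    · have hopen : IsOpen {p : {q : X × X // σ q.1 = σ q.2} |
          (p : X × X).1 ∈ K ∧ (p : X × X).2 ∈ K} := by
        have : IsOpen ((K ×ˢ K : Set (X × X))) := hKo.prod hKo
        exact this.preimage continuous_subtype_val
      refine Filter.mem_of_superset (hopen.mem_nhds ⟨haK, hbK⟩) ?_
      rintro ⟨⟨x, y⟩, hxy⟩ ⟨hx, hy⟩
      simp only [Set.mem_setOf_eq]
      rw [h1 x hx, h1 y hy, hxy]
    · rw [h1 a haK, h2 b hbK] at hp
      exact absurd hp (by simp)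
  · by_cases hbK : b ∈ K
    · rw [h2 a haK, h1 b hbK] at hp
      exact absurd hp (by simp)
    · rw [h2 a haK, h2 b hbK] at hp
      obtain rfl : a = b := Sum.inr.inj hp
      obtain ⟨e, hae, heσ⟩ := hσ a
      have hopen : IsOpen {p : {q : X × X // σ q.1 = σ q.2} |
          (p : X × X).1 ∈ e.source ∧ (p : X × X).2 ∈ e.source} := by
        have : IsOpen ((e.source ×ˢ e.source : Set (X × X))) :=
          e.open_source.prod e.open_source
        exact this.preimage continuous_subtype_val
      refine Filter.mem_of_superset (hopen.mem_nhds ⟨hae, hae⟩) ?_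
      rintro ⟨⟨x, y⟩, hxy⟩ ⟨hx, hy⟩
      simp only [Set.mem_setOf_eq]
      have hxy' : x = y := by
        apply e.injOn hx hy
        simpa [heσ] using hxy
      rw [hxy']
end
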